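/- Let q be a prime power and let d_a, d_b, d_c be nonnegative integers with d_a ≥ d_b + d_c. Fix a d_b-dimensional subspace W ⊆ F_q^{d_a}. Then (q − 1)(q^{d_a} − 1) · #{R ⊆ F_q^{d_a} : R is a d_c-dimensional subspace with W ∩ R ≠ {0}} ≤ (q^{d_b} − 1)(q^{d_c} − 1) · #{R ⊆ F_q^{d_a} : R is a d_c-dimensional subspace}. -/

import Mathlib

open Module

section Aux

variable {F : Type} [Field F] {V : Type} [AddCommGroup V] [Module F V]

theorem exists_linEquiv_map_aux (v w : V) (hv : v ≠ 0) (hw : w ≠ 0) :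
    ∃ e : V ≃ₗ[F] V, e v = w := by
  classical
  have hsv : LinearIndepOn F id ({v} : Set V) :=
    (linearIndepOn_singleton_iff F).mpr hv
  have hsw : LinearIndepOn F id ({w} : Set V) :=
    (linearIndepOn_singleton_iff F).mpr hw
  have hiv : v ∈ hsv.extend (Set.subset_univ _) := hsv.subset_extend _ rfl
  have hiw : w ∈ hsw.extend (Set.subset_univ _) := hsw.subset_extend _ rfl
  let bv := Module.Basis.extend hsv
  let bw := Module.Basis.extend hsw
  let σ0 := bv.indexEquiv bw
  let σ := σ0.trans (Equiv.swap (σ0 ⟨v, hiv⟩) ⟨w, hiw⟩)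
  refine ⟨bv.equiv bw σ, ?_⟩
  have h1 : bv ⟨v, hiv⟩ = v := Module.Basis.extend_apply_self hsv ⟨v, hiv⟩
  have h2 : bw ⟨w, hiw⟩ = w := Module.Basis.extend_apply_self hsw ⟨w, hiw⟩
  have h3 : (bv.equiv bw σ) (bv ⟨v, hiv⟩) = bw (σ ⟨v, hiv⟩) := bv.equiv_apply _ bw σ
  have h4 : σ ⟨v, hiv⟩ = ⟨w, hiw⟩ := by simp [σ]
  rw [h1] at h3
  rw [h3, h4, h2]

theorem card_mem_ne_zero [Fintype F] [Fintype V] (U : Submodule F V) :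
    Nat.card {x : V // x ∈ U ∧ x ≠ 0} = Fintype.card F ^ finrank F U - 1 := by
  classical
  have e : {x : V // x ∈ U ∧ x ≠ 0} ≃ {y : U // ¬ (y = 0)} :=
    { toFun := fun x => ⟨⟨x.1, x.2.1⟩, fun h => x.2.2 (congrArg Subtype.val h)⟩
      invFun := fun y => ⟨y.1.1, y.1.2, fun h => y.2 (Subtype.ext h)⟩
      left_inv := fun _ => rfl
      right_inv := fun _ => rfl }
  rw [Nat.card_congr e, Nat.card_eq_fintype_card, Fintype.card_subtype_compl,
    Fintype.card_subtype_eq (0 : U), card_eq_pow_finrank (K := F) (V := U)]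

theorem card_sigma_swap {α β : Type} (p : α → Prop) (s : β → Prop)
    (r : α → β → Prop) :
    Nat.card (Σ a : {a // p a}, {b // s b ∧ r a.1 b}) =
    Nat.card (Σ b : {b // s b}, {a // p a ∧ r a b.1}) := by
  exact Nat.card_congr
    { toFun := fun x => ⟨⟨x.2.1, x.2.2.1⟩, ⟨x.1.1, x.1.2, x.2.2.2⟩⟩
      invFun := fun y => ⟨⟨y.2.1, y.2.2.1⟩, ⟨y.1.1, y.1.2, y.2.2.2⟩⟩
      left_inv := fun _ => rfl
      right_inv := fun _ => rfl }

theorem nat_card_sigma {τ : Type} [Fintype τ] (f : τ → Type) [∀ a, Finite (f a)] :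
    Nat.card (Sigma f) = ∑ a, Nat.card (f a) := by
  classical
  haveI : ∀ a, Fintype (f a) := fun a => Fintype.ofFinite _
  simp [Nat.card_eq_fintype_card, Fintype.card_sigma]

end Aux

/-- (Non-asymptotic form of [SM18, Lemma 7.1].)  Over `F_q`, for
`d_a ≥ d_b + d_c` and a fixed `d_b`-dimensional subspace `W ⊆ F_q^{d_a}`,
`(q−1)(q^{d_a}−1) · #{R : dim R = d_c, W ∩ R ≠ 0} ≤ (q^{d_b}−1)(q^{d_c}−1) · #{R : dim R = d_c}`. -/
theorem stmt_4 (q : ℕ) (hq : IsPrimePow q)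
    (F : Type) [Field F] [Fintype F] (hcard : Fintype.card F = q)
    (da db dc : ℕ) (hd : db + dc ≤ da)
    (W : Submodule F (Fin da → F)) (hW : finrank F W = db) :
    (q - 1) * (q ^ da - 1) *
        Nat.card {R : Submodule F (Fin da → F) // finrank F R = dc ∧ W ⊓ R ≠ ⊥} ≤
      (q ^ db - 1) * (q ^ dc - 1) *
        Nat.card {R : Submodule F (Fin da → F) // finrank F R = dc} := by
  classical
  haveI : Finite (Submodule F (Fin da → F)) :=
    Finite.of_injective (fun R : Submodule F (Fin da → F) => (R : Set (Fin da → F)))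
      SetLike.coe_injective
  haveI instSub : Fintype (Submodule F (Fin da → F)) := Fintype.ofFinite _
  by_cases hWbot : W = ⊥
  · haveI : IsEmpty {R : Submodule F (Fin da → F) // finrank F R = dc ∧ W ⊓ R ≠ ⊥} :=
      ⟨fun R => R.2.2 (by simp [hWbot])⟩
    simp
  obtain ⟨v₀, hv₀W, hv₀⟩ := Submodule.exists_mem_ne_zero_of_ne_bot hWbot
  set N := Nat.card {R : Submodule F (Fin da → F) // finrank F R = dc ∧ v₀ ∈ R} with hN
  -- constancy of the number of dc-dimensional subspaces containing a fixed nonzero vector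
  have hT : ∀ v : Fin da → F, v ≠ 0 →
      Nat.card {R : Submodule F (Fin da → F) // finrank F R = dc ∧ v ∈ R} = N := by
    intro v hv
    obtain ⟨e, he⟩ := exists_linEquiv_map_aux (F := F) v₀ v hv₀ hv
    rw [hN]
    refine (Nat.card_congr ((Submodule.orderIsoMapComap e).toEquiv.subtypeEquiv
      (fun R => ?_))).symm
    have h1 : ((Submodule.orderIsoMapComap e).toEquiv R : Submodule F (Fin da → F)) =
        Submodule.map (e : (Fin da → F) →ₗ[F] (Fin da → F)) R := rfl
    rw [h1]
    have hfr : finrank F (Submodule.map (e : (Fin da → F) →ₗ[F] (Fin da → F)) R) =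
        finrank F R := LinearEquiv.finrank_map_eq e R
    constructor
    · rintro ⟨hr, hm⟩
      exact ⟨by rw [hfr]; exact hr, ⟨v₀, hm, he⟩⟩
    · rintro ⟨hr, hm⟩
      refine ⟨by rw [hfr] at hr; exact hr, ?_⟩
      obtain ⟨y, hy, hey⟩ := hm
      have : y = v₀ := e.injective (show e y = e v₀ by rw [he]; exact hey)
      exact this ▸ hy
  -- fiber count
  have hfib : ∀ R : Submodule F (Fin da → F), Nat.card {u : Fin da → F // u ≠ 0 ∧ u ∈ R}
      = q ^ finrank F R - 1 := by
    intro R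
    rw [Nat.card_congr (Equiv.subtypeEquivRight (fun u => and_comm)),
      card_mem_ne_zero, hcard]
  -- number of nonzero vectors in V
  have hcardV : Nat.card {u : Fin da → F // u ≠ 0} = q ^ da - 1 := by
    have h := hfib ⊤
    rw [Nat.card_congr (Equiv.subtypeEquivRight
      (fun u => by simp : ∀ u : Fin da → F,
        (u ≠ 0) ↔ (u ≠ 0 ∧ u ∈ (⊤ : Submodule F (Fin da → F))))),
      h, finrank_top, Module.finrank_fin_fun]
  -- double counting over all nonzero vectors
  have hswap1 := card_sigma_swap (fun R : Submodule F (Fin da → F) => finrank F R = dc)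
      (fun u : Fin da → F => u ≠ 0) (fun R u => u ∈ R)
  have hL1 : Nat.card (Σ R : {R : Submodule F (Fin da → F) // finrank F R = dc},
      {u : Fin da → F // u ≠ 0 ∧ u ∈ R.1}) =
      (q ^ dc - 1) * Nat.card {R : Submodule F (Fin da → F) // finrank F R = dc} := by
    have e1 : ∀ a : {R : Submodule F (Fin da → F) // finrank F R = dc},
        Nat.card {u : Fin da → F // u ≠ 0 ∧ u ∈ (a : Submodule F (Fin da → F))}
          = q ^ dc - 1 := fun a => by rw [hfib a.1, a.2]
    rw [nat_card_sigma, Finset.sum_congr rfl (fun a _ => e1 a),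
      Finset.sum_const, Finset.card_univ, smul_eq_mul, Nat.card_eq_fintype_card, mul_comm]
  have hR1 : Nat.card (Σ u : {u : Fin da → F // u ≠ 0},
      {R : Submodule F (Fin da → F) // finrank F R = dc ∧ u.1 ∈ R}) = (q ^ da - 1) * N := by
    have e1 : ∀ u : {u : Fin da → F // u ≠ 0},
        Nat.card {R : Submodule F (Fin da → F) // finrank F R = dc ∧ (u : Fin da → F) ∈ R}
          = N := fun u => hT u.1 u.2
    rw [nat_card_sigma, Finset.sum_congr rfl (fun u _ => e1 u),
      Finset.sum_const, Finset.card_univ, smul_eq_mul, ← Nat.card_eq_fintype_card, hcardV]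
  have key1 : (q ^ da - 1) * N =
      (q ^ dc - 1) * Nat.card {R : Submodule F (Fin da → F) // finrank F R = dc} := by
    rw [← hR1, ← hswap1, hL1]
  -- double counting over nonzero vectors of W
  have hswap2 := card_sigma_swap (fun R : Submodule F (Fin da → F) => finrank F R = dc)
      (fun u : Fin da → F => u ∈ W ∧ u ≠ 0) (fun R u => u ∈ R)
  have hR2 : Nat.card (Σ u : {u : Fin da → F // u ∈ W ∧ u ≠ 0},
      {R : Submodule F (Fin da → F) // finrank F R = dc ∧ u.1 ∈ R}) = (q ^ db - 1) * N := by
    have e1 : ∀ u : {u : Fin da → F // u ∈ W ∧ u ≠ 0},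
        Nat.card {R : Submodule F (Fin da → F) // finrank F R = dc ∧ (u : Fin da → F) ∈ R}
          = N := fun u => hT u.1 u.2.2
    rw [nat_card_sigma, Finset.sum_congr rfl (fun u _ => e1 u),
      Finset.sum_const, Finset.card_univ, smul_eq_mul, ← Nat.card_eq_fintype_card,
      card_mem_ne_zero, hW, hcard]
  -- lower bound on fibers over bad subspaces
  have hq1 : 1 ≤ q := le_trans (by norm_num) hq.two_le
  have hfibW : ∀ R : {R : Submodule F (Fin da → F) // finrank F R = dc}, W ⊓ R.1 ≠ ⊥ →
      q - 1 ≤ Nat.card {u : Fin da → F // (u ∈ W ∧ u ≠ 0) ∧ u ∈ R.1} := by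
    intro R hne
    have heq : Nat.card {u : Fin da → F // (u ∈ W ∧ u ≠ 0) ∧ u ∈ R.1}
        = q ^ finrank F (W ⊓ R.1 : Submodule F (Fin da → F)) - 1 := by
      rw [Nat.card_congr (Equiv.subtypeEquivRight
        (fun u => by simp only [Submodule.mem_inf]; tauto :
          ∀ u : Fin da → F, ((u ∈ W ∧ u ≠ 0) ∧ u ∈ R.1) ↔
            (u ∈ (W ⊓ R.1 : Submodule F (Fin da → F)) ∧ u ≠ 0))),
        card_mem_ne_zero, hcard]
    rw [heq]
    have hpos : 0 < finrank F (W ⊓ R.1 : Submodule F (Fin da → F)) := by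
      rw [finrank_pos_iff]
      exact Submodule.nontrivial_iff_ne_bot.mpr hne
    calc q - 1 = q ^ 1 - 1 := by rw [pow_one]
      _ ≤ q ^ finrank F (W ⊓ R.1 : Submodule F (Fin da → F)) - 1 :=
        Nat.sub_le_sub_right (Nat.pow_le_pow_right hq1 hpos) 1
  have hbadcard : Nat.card {R : Submodule F (Fin da → F) // finrank F R = dc ∧ W ⊓ R ≠ ⊥}
      = (Finset.univ.filter
          (fun x : {R : Submodule F (Fin da → F) // finrank F R = dc} => W ⊓ x.1 ≠ ⊥)).card := by
    rw [Nat.card_eq_fintype_card, ← Fintype.card_subtype]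
    exact Fintype.card_congr (Equiv.subtypeSubtypeEquivSubtypeInter _ _).symm
  have hL2 : (q - 1) *
      Nat.card {R : Submodule F (Fin da → F) // finrank F R = dc ∧ W ⊓ R ≠ ⊥} ≤
      Nat.card (Σ R : {R : Submodule F (Fin da → F) // finrank F R = dc},
        {u : Fin da → F // (u ∈ W ∧ u ≠ 0) ∧ u ∈ R.1}) := by
    rw [nat_card_sigma, hbadcard]
    calc (q - 1) * (Finset.univ.filter
          (fun x : {R : Submodule F (Fin da → F) // finrank F R = dc} => W ⊓ x.1 ≠ ⊥)).card
        = ∑ _x ∈ Finset.univ.filter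
            (fun x : {R : Submodule F (Fin da → F) // finrank F R = dc} => W ⊓ x.1 ≠ ⊥),
            (q - 1) := by rw [Finset.sum_const, smul_eq_mul, mul_comm]
      _ ≤ ∑ x ∈ Finset.univ.filter
            (fun x : {R : Submodule F (Fin da → F) // finrank F R = dc} => W ⊓ x.1 ≠ ⊥),
            Nat.card {u : Fin da → F // (u ∈ W ∧ u ≠ 0) ∧ u ∈ x.1} :=
          Finset.sum_le_sum (fun x hx => hfibW x (Finset.mem_filter.mp hx).2)
      _ ≤ ∑ x : {R : Submodule F (Fin da → F) // finrank F R = dc},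
            Nat.card {u : Fin da → F // (u ∈ W ∧ u ≠ 0) ∧ u ∈ x.1} :=
          Finset.sum_le_sum_of_subset (Finset.filter_subset _ _)
  have hmain : (q - 1) *
      Nat.card {R : Submodule F (Fin da → F) // finrank F R = dc ∧ W ⊓ R ≠ ⊥} ≤
      (q ^ db - 1) * N := hL2.trans (le_of_eq (by rw [hswap2, hR2]))
  calc (q - 1) * (q ^ da - 1) *
        Nat.card {R : Submodule F (Fin da → F) // finrank F R = dc ∧ W ⊓ R ≠ ⊥}
      = (q ^ da - 1) * ((q - 1) *
          Nat.card {R : Submodule F (Fin da → F) // finrank F R = dc ∧ W ⊓ R ≠ ⊥}) := by ring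
    _ ≤ (q ^ da - 1) * ((q ^ db - 1) * N) := Nat.mul_le_mul_left _ hmain
    _ = (q ^ db - 1) * ((q ^ da - 1) * N) := by ring
    _ = (q ^ db - 1) * ((q ^ dc - 1) *
          Nat.card {R : Submodule F (Fin da → F) // finrank F R = dc}) := by rw [key1]
    _ = (q ^ db - 1) * (q ^ dc - 1) *
          Nat.card {R : Submodule F (Fin da → F) // finrank F R = dc} := by ring
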